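/- arXiv:2203.11375 — 7 statements merged into one kernel-verified Lean document; each statement's English description precedes it below -/
import Mathlib

section
/- Let K ∈ ℝ^{(T+1)n_u × (T+1)n_x} be block-lower-triangular. Then the matrix I − Z(bold(Â) + bold(B̂)K) is invertible, and the matrices Φ_x := (I − Z(bold(Â) + bold(B̂)K))^{-1} and Φ_u := K Φ_x are block-lower-triangular and satisfy the affine constraint (I − Z bold(Â)) Φ_x − Z bold(B̂) Φ_u = I. -/
/-- The block down-shift matrix. -/
def shiftZ (T n : ℕ) : Matrix (Fin (T + 1) × Fin n) (Fin (T + 1) × Fin n) ℝ :=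
  fun p q => if (p.1 : ℕ) = (q.1 : ℕ) + 1 ∧ p.2 = q.2 then 1 else 0

/-- Block-lower-triangular predicate. -/
def BlockLT {T p q : ℕ} (M : Matrix (Fin (T + 1) × Fin p) (Fin (T + 1) × Fin q) ℝ) : Prop :=
  ∀ i j : Fin (T + 1), i < j → ∀ a b, M (i, a) (j, b) = 0

/-- Block-diagonal matrix with `T+1` copies of `M` on the diagonal. -/
def blkdiag (T : ℕ) {p q : ℕ} (M : Matrix (Fin p) (Fin q) ℝ) :
    Matrix (Fin (T + 1) × Fin p) (Fin (T + 1) × Fin q) ℝ :=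
  fun a b => if a.1 = b.1 then M a.2 b.2 else 0

theorem stmt1 (T nx nu : ℕ) (hT : 1 ≤ T) (hnx : 1 ≤ nx) (hnu : 1 ≤ nu)
    (Ahat : Matrix (Fin nx) (Fin nx) ℝ) (Bhat : Matrix (Fin nx) (Fin nu) ℝ)
    (K : Matrix (Fin (T + 1) × Fin nu) (Fin (T + 1) × Fin nx) ℝ) (hK : BlockLT K)
    (Φx : Matrix (Fin (T + 1) × Fin nx) (Fin (T + 1) × Fin nx) ℝ)
    (hΦx : Φx = (1 - shiftZ T nx * (blkdiag T Ahat + blkdiag T Bhat * K))⁻¹)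
    (Φu : Matrix (Fin (T + 1) × Fin nu) (Fin (T + 1) × Fin nx) ℝ)
    (hΦu : Φu = K * Φx) :
    IsUnit (1 - shiftZ T nx * (blkdiag T Ahat + blkdiag T Bhat * K)) ∧
    BlockLT Φx ∧ BlockLT Φu ∧
    (1 - shiftZ T nx * blkdiag T Ahat) * Φx - shiftZ T nx * blkdiag T Bhat * Φu = 1 := by
  set S := blkdiag T Ahat + blkdiag T Bhat * K with hSdef
  set N := shiftZ T nx * S with hNdef
  -- S is block-lower-triangular (blocks (k,j) vanish for k < j)
  have hS : ∀ (k j : Fin (T + 1)), k < j → ∀ c b, S (k, c) (j, b) = 0 := by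
    intro k j hkj c b
    have hkj' : k ≠ j := ne_of_lt hkj
    rw [hSdef, Matrix.add_apply, Matrix.mul_apply]
    have h1 : blkdiag T Ahat (k, c) (j, b) = 0 := by
      simp [blkdiag, hkj']
    rw [h1, zero_add, Finset.sum_eq_zero]
    intro z _
    rcases z with ⟨l, d⟩
    by_cases hkl : k = l
    · subst hkl
      rw [hK k j hkj d b, mul_zero]
    · simp [blkdiag, hkl]
  -- N is strictly block-lower-triangular
  have hN : ∀ x y : Fin (T + 1) × Fin nx, (x.1 : ℕ) ≤ (y.1 : ℕ) → N x y = 0 := by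
    intro x y hxy
    rw [hNdef, Matrix.mul_apply, Finset.sum_eq_zero]
    intro z _
    by_cases h : (x.1 : ℕ) = (z.1 : ℕ) + 1 ∧ x.2 = z.2
    · have hz : z.1 < y.1 := by
        rw [Fin.lt_def]
        omega
      have := hS z.1 y.1 hz z.2 y.2
      simp only [Prod.mk.eta] at this
      rw [this, mul_zero]
    · simp [shiftZ, h]
  -- 1 - N is BlockTriangular w.r.t. the order-dual of the first component
  have hBT : Matrix.BlockTriangular (1 - N) (fun p => OrderDual.toDual p.1) := by
    intro i j hij
    have hij' : i.1 < j.1 := hij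
    have hne : i ≠ j := by
      intro h; subst h; exact lt_irrefl _ hij'
    rw [Matrix.sub_apply, Matrix.one_apply_ne hne, hN i j (le_of_lt hij'), sub_zero]
  -- determinant of 1 - N is 1
  have hdet : (1 - N).det = 1 := by
    rw [hBT.det]
    apply Finset.prod_eq_one
    intro a _
    have hblk : (1 - N).toSquareBlock (fun p => OrderDual.toDual p.1) a = 1 := by
      ext x y
      have hx1 : (x : Fin (T + 1) × Fin nx).1 = OrderDual.ofDual a := congrArg OrderDual.ofDual x.2
      have hy1 : (y : Fin (T + 1) × Fin nx).1 = OrderDual.ofDual a := congrArg OrderDual.ofDual y.2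
      have hxy1 : (x : Fin (T + 1) × Fin nx).1 = (y : Fin (T + 1) × Fin nx).1 := by
        rw [hx1, hy1]
      simp only [Matrix.toSquareBlock_def, Matrix.of_apply, Matrix.sub_apply]
      rw [hN _ _ (le_of_eq (congrArg Fin.val hxy1)), sub_zero]
      by_cases h : x = y
      · subst h; rw [Matrix.one_apply_eq, Matrix.one_apply_eq]
      · rw [Matrix.one_apply_ne (fun hc => h (Subtype.ext hc)), Matrix.one_apply_ne h]
    rw [hblk, Matrix.det_one]
  have hUdet : IsUnit (1 - N).det := by rw [hdet]; exact isUnit_one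
  have hUnit : IsUnit (1 - N) := (Matrix.isUnit_iff_isUnit_det _).2 hUdet
  haveI : Invertible (1 - N) := (1 - N).invertibleOfIsUnitDet hUdet
  -- Φx is block-lower-triangular
  have hBTinv := Matrix.blockTriangular_inv_of_blockTriangular hBT
  have hΦxLT : BlockLT Φx := by
    intro i j hij a b
    rw [hΦx]
    exact hBTinv (show OrderDual.toDual j < OrderDual.toDual i from hij)
  -- Φu is block-lower-triangular
  have hΦuLT : BlockLT Φu := by
    intro i j hij a b
    rw [hΦu, Matrix.mul_apply, Finset.sum_eq_zero]
    intro z _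
    rcases z with ⟨k, c⟩
    by_cases h : i < k
    · rw [hK i k h a c, zero_mul]
    · have hkj : k < j := lt_of_le_of_lt (not_lt.1 h) hij
      rw [hΦxLT k j hkj c b, mul_zero]
  refine ⟨hUnit, hΦxLT, hΦuLT, ?_⟩
  have key : (1 - shiftZ T nx * blkdiag T Ahat) * Φx - shiftZ T nx * blkdiag T Bhat * Φu
      = (1 - N) * Φx := by
    rw [hΦu, hNdef, hSdef, Matrix.mul_add, Matrix.sub_mul, Matrix.sub_mul,
      Matrix.add_mul, ← Matrix.mul_assoc, ← Matrix.mul_assoc, sub_sub]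
  rw [key, hΦx]
  exact Matrix.mul_nonsing_inv _ hUdet
end

section
/- Let Φ_x ∈ ℝ^{(T+1)n_x × (T+1)n_x} and Φ_u ∈ ℝ^{(T+1)n_u × (T+1)n_x} be block-lower-triangular matrices satisfying (I − Z bold(Â)) Φ_x − Z bold(B̂) Φ_u = I. Then every diagonal block of Φ_x equals the n_x×n_x identity, Φ_x is invertible, the controller K := Φ_u Φ_x^{-1} is block-lower-triangular, and K achieves the given system responses, i.e., (I − Z(bold(Â) + bold(B̂)K))^{-1} = Φ_x and K (I − Z(bold(Â) + bold(B̂)K))^{-1} = Φ_u. -/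
namespace Stmt2Aux

def SBLT {T p q : ℕ} (M : Matrix (Fin (T + 1) × Fin p) (Fin (T + 1) × Fin q) ℝ) : Prop :=
  ∀ i j : Fin (T + 1), i ≤ j → ∀ a b, M (i, a) (j, b) = 0

variable {T p q r : ℕ}

theorem SBLT.blockLT {M : Matrix (Fin (T + 1) × Fin p) (Fin (T + 1) × Fin q) ℝ}
    (h : SBLT M) : BlockLT M := fun i j hij a b => h i j hij.le a b

theorem blockLT_one : BlockLT (1 : Matrix (Fin (T + 1) × Fin p) (Fin (T + 1) × Fin p) ℝ) := by
  intro i j hij a b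
  simp [Matrix.one_apply, Prod.ext_iff, hij.ne]

theorem BlockLT.mul {M : Matrix (Fin (T + 1) × Fin p) (Fin (T + 1) × Fin q) ℝ}
    {N : Matrix (Fin (T + 1) × Fin q) (Fin (T + 1) × Fin r) ℝ}
    (hM : BlockLT M) (hN : BlockLT N) : BlockLT (M * N) := by
  intro i j hij a b
  rw [Matrix.mul_apply]
  apply Finset.sum_eq_zero
  rintro ⟨k, c⟩ -
  rcases lt_or_ge i k with h2 | h2
  · rw [hM i k h2 a c, zero_mul]
  · rw [hN k j (lt_of_le_of_lt h2 hij) c b, mul_zero]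

theorem SBLT.mul_blockLT {M : Matrix (Fin (T + 1) × Fin p) (Fin (T + 1) × Fin q) ℝ}
    {N : Matrix (Fin (T + 1) × Fin q) (Fin (T + 1) × Fin r) ℝ}
    (hM : SBLT M) (hN : BlockLT N) : SBLT (M * N) := by
  intro i j hij a b
  rw [Matrix.mul_apply]
  apply Finset.sum_eq_zero
  rintro ⟨k, c⟩ -
  rcases le_or_gt i k with h2 | h2
  · rw [hM i k h2 a c, zero_mul]
  · rw [hN k j (lt_of_lt_of_le h2 hij) c b, mul_zero]

theorem SBLT.add {M N : Matrix (Fin (T + 1) × Fin p) (Fin (T + 1) × Fin q) ℝ}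
    (hM : SBLT M) (hN : SBLT N) : SBLT (M + N) := by
  intro i j hij a b
  simp [Matrix.add_apply, hM i j hij a b, hN i j hij a b]

theorem SBLT.neg {M : Matrix (Fin (T + 1) × Fin p) (Fin (T + 1) × Fin q) ℝ}
    (hM : SBLT M) : SBLT (-M) := by
  intro i j hij a b
  simp [Matrix.neg_apply, hM i j hij a b]

theorem shiftZ_SBLT : SBLT (shiftZ T p) := by
  intro i j hij a b
  simp only [shiftZ, ite_eq_right_iff, and_imp]
  intro h1 _
  omega

theorem blkdiag_blockLT (M : Matrix (Fin p) (Fin q) ℝ) : BlockLT (blkdiag T M) := by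
  intro i j hij a b
  simp [blkdiag, hij.ne]

theorem SBLT.pow_entry {M : Matrix (Fin (T + 1) × Fin p) (Fin (T + 1) × Fin p) ℝ}
    (hM : SBLT M) : ∀ m (i j : Fin (T + 1)), (i : ℕ) < (j : ℕ) + m → ∀ a b,
      (M ^ m) (i, a) (j, b) = 0 := by
  intro m
  induction m with
  | zero =>
    intro i j hij a b
    have : (i, a) ≠ (j, b) := by
      simp only [ne_eq, Prod.mk.injEq, not_and]
      intro h; exact absurd (congrArg Fin.val h) (by omega)
    rw [pow_zero]
    exact Matrix.one_apply_ne this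
  | succ m ih =>
    intro i j hij a b
    rw [pow_succ, Matrix.mul_apply]
    apply Finset.sum_eq_zero
    rintro ⟨k, c⟩ -
    rcases le_or_gt (k : ℕ) (j : ℕ) with h2 | h2
    · rw [hM k j (Fin.le_def.mpr h2) c b, mul_zero]
    · rw [ih i k (by omega) a c, zero_mul]

theorem SBLT.pow_nilpotent {M : Matrix (Fin (T + 1) × Fin p) (Fin (T + 1) × Fin p) ℝ}
    (hM : SBLT M) : M ^ (T + 1) = 0 := by
  ext ⟨i, a⟩ ⟨j, b⟩
  rw [Matrix.zero_apply]
  exact hM.pow_entry (T + 1) i j (by omega) a b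

theorem SBLT.pow_succ_SBLT {M : Matrix (Fin (T + 1) × Fin p) (Fin (T + 1) × Fin p) ℝ}
    (hM : SBLT M) : ∀ m, SBLT (M ^ (m + 1)) := by
  intro m
  induction m with
  | zero => simpa using hM
  | succ m ih => rw [pow_succ]; exact ih.mul_blockLT hM.blockLT

end Stmt2Aux

open Stmt2Aux

theorem stmt2 (T nx nu : ℕ) (hT : 1 ≤ T) (hnx : 1 ≤ nx) (hnu : 1 ≤ nu)
    (Ahat : Matrix (Fin nx) (Fin nx) ℝ) (Bhat : Matrix (Fin nx) (Fin nu) ℝ)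
    (Φx : Matrix (Fin (T + 1) × Fin nx) (Fin (T + 1) × Fin nx) ℝ)
    (Φu : Matrix (Fin (T + 1) × Fin nu) (Fin (T + 1) × Fin nx) ℝ)
    (hΦxLT : BlockLT Φx) (hΦuLT : BlockLT Φu)
    (haff : (1 - shiftZ T nx * blkdiag T Ahat) * Φx - shiftZ T nx * blkdiag T Bhat * Φu = 1)
    (K : Matrix (Fin (T + 1) × Fin nu) (Fin (T + 1) × Fin nx) ℝ)
    (hKdef : K = Φu * Φx⁻¹) :
    (∀ (i : Fin (T + 1)) (a b : Fin nx), Φx (i, a) (i, b) = if a = b then (1 : ℝ) else 0) ∧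
    IsUnit Φx ∧
    BlockLT K ∧
    IsUnit (1 - shiftZ T nx * (blkdiag T Ahat + blkdiag T Bhat * K)) ∧
    (1 - shiftZ T nx * (blkdiag T Ahat + blkdiag T Bhat * K))⁻¹ = Φx ∧
    K * (1 - shiftZ T nx * (blkdiag T Ahat + blkdiag T Bhat * K))⁻¹ = Φu := by
  set S := shiftZ T nx * blkdiag T Ahat with hS
  set NB := shiftZ T nx * blkdiag T Bhat with hNB
  have hSsb : SBLT S := shiftZ_SBLT.mul_blockLT (blkdiag_blockLT _)
  have hNBsb : SBLT NB := shiftZ_SBLT.mul_blockLT (blkdiag_blockLT _)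
  set M := S * Φx + NB * Φu with hM
  have hMsb : SBLT M := (hSsb.mul_blockLT hΦxLT).add (hNBsb.mul_blockLT hΦuLT)
  have hΦx : Φx = 1 + M := by
    rw [hM, ← haff]; noncomm_ring
  set G : Matrix (Fin (T + 1) × Fin nx) (Fin (T + 1) × Fin nx) ℝ :=
    ∑ k ∈ Finset.range (T + 1), (-M) ^ k with hG
  have hMnil : (-M) ^ (T + 1) = 0 := by
    rw [neg_pow, hMsb.pow_nilpotent, mul_zero]
  have hΦxG : Φx * G = 1 := by
    have h1 : (-M - 1) * G = (-M) ^ (T + 1) - 1 := mul_geom_sum (-M) (T + 1)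
    rw [hMnil] at h1
    have : Φx * G = -((-M - 1) * G) := by rw [hΦx]; noncomm_ring
    rw [this, h1, zero_sub, neg_neg]
  have hGΦx : G * Φx = 1 := by
    have h1 : G * (-M - 1) = (-M) ^ (T + 1) - 1 := geom_sum_mul (-M) (T + 1)
    rw [hMnil] at h1
    have : G * Φx = -(G * (-M - 1)) := by rw [hΦx]; noncomm_ring
    rw [this, h1, zero_sub, neg_neg]
  have hGLT : BlockLT G := by
    intro i j hij a b
    rw [hG, Matrix.sum_apply]
    apply Finset.sum_eq_zero
    intro k _
    cases k with
    | zero => exact blockLT_one i j hij a b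
    | succ m => exact (hMsb.neg.pow_succ_SBLT m) i j hij.le a b
  have hUnit : IsUnit Φx := by
    exact ⟨⟨Φx, G, hΦxG, hGΦx⟩, rfl⟩
  have hinv : Φx⁻¹ = G := Matrix.inv_eq_right_inv hΦxG
  have hdiag : ∀ (i : Fin (T + 1)) (a b : Fin nx),
      Φx (i, a) (i, b) = if a = b then (1 : ℝ) else 0 := by
    intro i a b
    rw [hΦx, Matrix.add_apply, hMsb i i le_rfl a b, add_zero, Matrix.one_apply]
    simp [Prod.ext_iff]
  have hKLT : BlockLT K := by
    rw [hKdef, hinv]; exact BlockLT.mul hΦuLT hGLT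
  have hKΦx : K * Φx = Φu := by
    rw [hKdef, hinv, Matrix.mul_assoc, hGΦx, Matrix.mul_one]
  have hform : 1 - shiftZ T nx * (blkdiag T Ahat + blkdiag T Bhat * K) = 1 - S - NB * K := by
    rw [hS, hNB, Matrix.mul_add, ← Matrix.mul_assoc, sub_add_eq_sub_sub]
  have hW : (1 - S - NB * K) * Φx = 1 := by
    have h2 : (1 - S - NB * K) * Φx = (1 - S) * Φx - NB * K * Φx := by noncomm_ring
    rw [h2, Matrix.mul_assoc NB K Φx, hKΦx]
    exact haff
  have hΦxW : Φx * (1 - S - NB * K) = 1 := by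
    have : (1 - S - NB * K) = G := by
      calc 1 - S - NB * K = (1 - S - NB * K) * (Φx * G) := by rw [hΦxG, Matrix.mul_one]
        _ = ((1 - S - NB * K) * Φx) * G := (Matrix.mul_assoc _ _ _).symm
        _ = G := by rw [hW, Matrix.one_mul]
    rw [this, hΦxG]
  refine ⟨hdiag, hUnit, hKLT, ?_, ?_, ?_⟩
  · rw [hform]; exact ⟨⟨_, Φx, hW, hΦxW⟩, rfl⟩
  · rw [hform]; exact Matrix.inv_eq_right_inv hW
  · rw [hform, Matrix.inv_eq_right_inv hW]; exact hKΦx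
end

section
/- Let Σ ∈ ℝ^{(T+1)n_x × (T+1)n_x} be an invertible block-lower-triangular matrix, and let Φ_x ∈ ℝ^{(T+1)n_x × (T+1)n_x}, Φ_u ∈ ℝ^{(T+1)n_u × (T+1)n_x}. Then (Φ_x, Φ_u) are block-lower-triangular and satisfy (I − Z bold(Â)) Φ_x − Z bold(B̂) Φ_u = I if and only if Φ̃_x := Φ_x Σ and Φ̃_u := Φ_u Σ are block-lower-triangular and satisfy (I − Z bold(Â)) Φ̃_x − Z bold(B̂) Φ̃_u = Σ. -/
lemma BlockLT.mul' {T p q r : ℕ}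
    {M : Matrix (Fin (T + 1) × Fin p) (Fin (T + 1) × Fin q) ℝ}
    {N : Matrix (Fin (T + 1) × Fin q) (Fin (T + 1) × Fin r) ℝ}
    (hM : BlockLT M) (hN : BlockLT N) : BlockLT (M * N) := by
  intro i j hij a b
  rw [Matrix.mul_apply]
  apply Finset.sum_eq_zero
  intro k _
  by_cases h : i < k.1
  · rw [show M (i, a) k = 0 from hM i k.1 h a k.2, zero_mul]
  · rw [show N k (j, b) = 0 from hN k.1 j (lt_of_le_of_lt (not_lt.1 h) hij) k.2 b, mul_zero]

lemma blockLT_iff_blockTriangular {T p : ℕ}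
    {M : Matrix (Fin (T + 1) × Fin p) (Fin (T + 1) × Fin p) ℝ} :
    BlockLT M ↔ M.BlockTriangular (fun x => OrderDual.toDual x.1) := by
  constructor
  · intro h i j hij
    exact h i.1 j.1 hij i.2 j.2
  · intro h i j hij a b
    exact h (show OrderDual.toDual (j, b).1 < OrderDual.toDual (i, a).1 from hij)

lemma BlockLT.inv {T p : ℕ}
    {M : Matrix (Fin (T + 1) × Fin p) (Fin (T + 1) × Fin p) ℝ}
    (hM : BlockLT M) (hU : IsUnit M) : BlockLT M⁻¹ := by
  haveI := hU.invertible
  exact blockLT_iff_blockTriangular.2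
    (Matrix.blockTriangular_inv_of_blockTriangular (blockLT_iff_blockTriangular.1 hM))

theorem stmt5 (T nx nu : ℕ) (hT : 1 ≤ T) (hnx : 1 ≤ nx) (hnu : 1 ≤ nu)
    (Ahat : Matrix (Fin nx) (Fin nx) ℝ) (Bhat : Matrix (Fin nx) (Fin nu) ℝ)
    (Sig : Matrix (Fin (T + 1) × Fin nx) (Fin (T + 1) × Fin nx) ℝ)
    (hSigLT : BlockLT Sig) (hSigUnit : IsUnit Sig)
    (Φx : Matrix (Fin (T + 1) × Fin nx) (Fin (T + 1) × Fin nx) ℝ)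
    (Φu : Matrix (Fin (T + 1) × Fin nu) (Fin (T + 1) × Fin nx) ℝ) :
    (BlockLT Φx ∧ BlockLT Φu ∧
      (1 - shiftZ T nx * blkdiag T Ahat) * Φx - shiftZ T nx * blkdiag T Bhat * Φu = 1) ↔
    (BlockLT (Φx * Sig) ∧ BlockLT (Φu * Sig) ∧
      (1 - shiftZ T nx * blkdiag T Ahat) * (Φx * Sig) -
        shiftZ T nx * blkdiag T Bhat * (Φu * Sig) = Sig) := by
  haveI := hSigUnit.invertible
  have hinvLT : BlockLT Sig⁻¹ := hSigLT.inv hSigUnit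
  have key : (1 - shiftZ T nx * blkdiag T Ahat) * (Φx * Sig) -
      shiftZ T nx * blkdiag T Bhat * (Φu * Sig) =
      ((1 - shiftZ T nx * blkdiag T Ahat) * Φx -
        shiftZ T nx * blkdiag T Bhat * Φu) * Sig := by
    simp only [Matrix.sub_mul, Matrix.mul_assoc, Matrix.one_mul]
  constructor
  · rintro ⟨h1, h2, h3⟩
    exact ⟨h1.mul' hSigLT, h2.mul' hSigLT, by rw [key, h3, Matrix.one_mul]⟩
  · rintro ⟨h1, h2, h3⟩
    have hx : Φx = Φx * Sig * Sig⁻¹ := by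
      rw [Matrix.mul_inv_cancel_right_of_invertible]
    have hu : Φu = Φu * Sig * Sig⁻¹ := by
      rw [Matrix.mul_inv_cancel_right_of_invertible]
    rw [key] at h3
    refine ⟨hx ▸ h1.mul' hinvLT, hu ▸ h2.mul' hinvLT, ?_⟩
    calc (1 - shiftZ T nx * blkdiag T Ahat) * Φx - shiftZ T nx * blkdiag T Bhat * Φu
        = ((1 - shiftZ T nx * blkdiag T Ahat) * Φx -
            shiftZ T nx * blkdiag T Bhat * Φu) * Sig * Sig⁻¹ :=
          (Matrix.mul_inv_cancel_right_of_invertible _ _).symm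
      _ = Sig * Sig⁻¹ := by rw [h3]
      _ = 1 := Matrix.mul_inv_of_invertible Sig
end

section
/- Let x_0 ∈ ℝ^{n_x}, Φ ∈ ℝ^{n_u×n_x}, S ∈ ℝ^{n_x×n_x}, σ_w ≥ 0, d_0 ∈ ℝ^{n_x} with strictly positive entries, and let V = {(Δ_{A,1},Δ_{B,1}),…,(Δ_{A,M},Δ_{B,M})} be a finite set of matrix pairs. Suppose that for every vertex (Δ_{A,j},Δ_{B,j}) ∈ V and every i ∈ {1,…,n_x}, |e_i^⊤(Δ_{A,j} x_0 + Δ_{B,j} Φ x_0 − S x_0)| + σ_w ≤ (d_0)_i. Then for every (Δ_A,Δ_B) in the convex hull of V and every w_0 ∈ ℝ^{n_x} with ‖w_0‖_∞ ≤ σ_w, there exists w̃_0 ∈ ℝ^{n_x} with ‖w̃_0‖_∞ ≤ 1 such that Δ_A x_0 + Δ_B Φ x_0 + w_0 = S x_0 + diag(d_0) w̃_0. -/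
theorem stmt9 (nx nu M : ℕ) (hnx : 1 ≤ nx) (hnu : 1 ≤ nu) (hM : 1 ≤ M)
    (x0 : Fin nx → ℝ) (Φ : Matrix (Fin nu) (Fin nx) ℝ) (S : Matrix (Fin nx) (Fin nx) ℝ)
    (σw : ℝ) (hσw : 0 ≤ σw) (d0 : Fin nx → ℝ) (hd0 : ∀ i, 0 < d0 i)
    (ΔA : Fin M → Matrix (Fin nx) (Fin nx) ℝ) (ΔB : Fin M → Matrix (Fin nx) (Fin nu) ℝ)
    (hcon : ∀ (j : Fin M) (i : Fin nx),
      |((ΔA j).mulVec x0 + (ΔB j).mulVec (Φ.mulVec x0) - S.mulVec x0) i| + σw ≤ d0 i) :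
    ∀ p ∈ convexHull ℝ (Set.range fun j => (ΔA j, ΔB j)),
      ∀ w0 : Fin nx → ℝ, ‖w0‖ ≤ σw →
        ∃ wt0 : Fin nx → ℝ, ‖wt0‖ ≤ 1 ∧
          p.1.mulVec x0 + p.2.mulVec (Φ.mulVec x0) + w0 =
            S.mulVec x0 + (Matrix.diagonal d0).mulVec wt0 := by
  set y := Φ.mulVec x0 with hy
  set C : Set (Matrix (Fin nx) (Fin nx) ℝ × Matrix (Fin nx) (Fin nu) ℝ) :=
    {p | ∀ i, |(p.1.mulVec x0 + p.2.mulVec y - S.mulVec x0) i| + σw ≤ d0 i} with hC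
  have hconv : Convex ℝ C := by
    intro p hp q hq a b ha hb hab i
    have hp' := hp i
    have hq' := hq i
    have hpsmul : ((a • p + b • q).1.mulVec x0 + (a • p + b • q).2.mulVec y
        - S.mulVec x0) i
        = a * (p.1.mulVec x0 + p.2.mulVec y - S.mulVec x0) i
          + b * (q.1.mulVec x0 + q.2.mulVec y - S.mulVec x0) i := by
      simp only [Prod.fst_add, Prod.snd_add, Prod.smul_fst, Prod.smul_snd,
        Matrix.add_mulVec, Matrix.smul_mulVec, Pi.add_apply, Pi.sub_apply,
        Pi.smul_apply, smul_eq_mul]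
      have : a * S.mulVec x0 i + b * S.mulVec x0 i = S.mulVec x0 i := by
        rw [← add_mul, hab, one_mul]
      ring_nf
      nlinarith [this]
    rw [hpsmul]
    calc |a * (p.1.mulVec x0 + p.2.mulVec y - S.mulVec x0) i
          + b * (q.1.mulVec x0 + q.2.mulVec y - S.mulVec x0) i| + σw
        ≤ a * |(p.1.mulVec x0 + p.2.mulVec y - S.mulVec x0) i|
          + b * |(q.1.mulVec x0 + q.2.mulVec y - S.mulVec x0) i| + σw := by
          have := abs_add_le (a * (p.1.mulVec x0 + p.2.mulVec y - S.mulVec x0) i)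
            (b * (q.1.mulVec x0 + q.2.mulVec y - S.mulVec x0) i)
          rw [abs_mul, abs_mul, abs_of_nonneg ha, abs_of_nonneg hb] at this
          linarith
      _ ≤ d0 i := by
          have h1 : a * |(p.1.mulVec x0 + p.2.mulVec y - S.mulVec x0) i| ≤ a * (d0 i - σw) :=
            mul_le_mul_of_nonneg_left (by linarith) ha
          have h2 : b * |(q.1.mulVec x0 + q.2.mulVec y - S.mulVec x0) i| ≤ b * (d0 i - σw) :=
            mul_le_mul_of_nonneg_left (by linarith) hb
          have h3 : a * (d0 i - σw) + b * (d0 i - σw) = d0 i - σw := by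
            rw [← add_mul, hab, one_mul]
          linarith
  have hrange : Set.range (fun j => (ΔA j, ΔB j)) ⊆ C := by
    rintro _ ⟨j, rfl⟩ i
    exact hcon j i
  intro p hp w0 hw0
  have hpC : p ∈ C := convexHull_min hrange hconv hp
  set η : Fin nx → ℝ := fun i => (p.1.mulVec x0 + p.2.mulVec y + w0 - S.mulVec x0) i with hη
  refine ⟨fun i => η i / d0 i, ?_, ?_⟩
  · rw [pi_norm_le_iff_of_nonneg zero_le_one]
    intro i
    have hw0i : |w0 i| ≤ σw := le_trans (norm_le_pi_norm w0 i) hw0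
    have h1 : |η i| ≤ d0 i := by
      have hpi := hpC i
      have : |η i| ≤ |(p.1.mulVec x0 + p.2.mulVec y - S.mulVec x0) i| + |w0 i| := by
        have : η i = (p.1.mulVec x0 + p.2.mulVec y - S.mulVec x0) i + w0 i := by
          simp [hη]; ring
        rw [this]; exact abs_add_le _ _
      linarith
    rw [Real.norm_eq_abs, abs_div, abs_of_pos (hd0 i), div_le_one (hd0 i)]
    exact h1
  · funext i
    have : (Matrix.diagonal d0).mulVec (fun i => η i / d0 i) i = η i := by
      rw [Matrix.mulVec_diagonal, mul_div_cancel₀ _ (hd0 i).ne']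
    simp only [Pi.add_apply, this]
    simp [hη]
end

section
/- Fix t with 1 ≤ t ≤ T−1, x_0 ∈ ℝ^{n_x}, σ_w ≥ 0, d_t ∈ ℝ^{n_x} with strictly positive entries, matrices A_0, A_1, …, A_t ∈ ℝ^{n_x×n_x} and B_0, B_1, …, B_t ∈ ℝ^{n_u×n_x} (the blocks (Φ̃_x)_{t,i'} and (Φ̃_u)_{t,i'}), matrices S_0, S_1, …, S_t ∈ ℝ^{n_x×n_x} (the blocks Σ_{t+1,i'}), and a finite set V of matrix pairs (Δ_{A,j},Δ_{B,j}). Suppose that for every (Δ_{A,j},Δ_{B,j}) ∈ V and every i ∈ {1,…,n_x}, |e_i^⊤(Δ_{A,j} A_0 + Δ_{B,j} B_0 − S_0) x_0| + Σ_{i'=1}^{t} ‖e_i^⊤(Δ_{A,j} A_{i'} + Δ_{B,j} B_{i'} − S_{i'})‖_1 + σ_w ≤ (d_t)_i. Then for every (Δ_A,Δ_B) in the convex hull of V, every w̃_0,…,w̃_{t−1} ∈ ℝ^{n_x} with ‖w̃_{i'}‖_∞ ≤ 1, and every w_t ∈ ℝ^{n_x} with ‖w_t‖_∞ ≤ σ_w,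 there exists w̃_t ∈ ℝ^{n_x} with ‖w̃_t‖_∞ ≤ 1 such that (Δ_A A_0 + Δ_B B_0) x_0 + Σ_{i'=1}^{t} (Δ_A A_{i'} + Δ_B B_{i'}) w̃_{i'−1} + w_t = S_0 x_0 + Σ_{i'=1}^{t} S_{i'} w̃_{i'−1} + diag(d_t) w̃_t. -/
theorem stmt10 (T nx nu M t : ℕ) (ht1 : 1 ≤ t) (ht2 : t ≤ T - 1)
    (hnx : 1 ≤ nx) (hnu : 1 ≤ nu) (hM : 1 ≤ M)
    (x0 : Fin nx → ℝ) (σw : ℝ) (hσw : 0 ≤ σw)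
    (dt : Fin nx → ℝ) (hdt : ∀ i, 0 < dt i)
    (A : Fin (t + 1) → Matrix (Fin nx) (Fin nx) ℝ)
    (B : Fin (t + 1) → Matrix (Fin nu) (Fin nx) ℝ)
    (S : Fin (t + 1) → Matrix (Fin nx) (Fin nx) ℝ)
    (ΔA : Fin M → Matrix (Fin nx) (Fin nx) ℝ) (ΔB : Fin M → Matrix (Fin nx) (Fin nu) ℝ)
    (hcon : ∀ (j : Fin M) (i : Fin nx),
      |((ΔA j * A 0 + ΔB j * B 0 - S 0).mulVec x0) i| +
        (∑ i' : Fin t, ∑ k : Fin nx,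
          |(ΔA j * A i'.succ + ΔB j * B i'.succ - S i'.succ) i k|) + σw ≤ dt i) :
    ∀ p ∈ convexHull ℝ (Set.range fun j => (ΔA j, ΔB j)),
      ∀ wt : Fin t → Fin nx → ℝ, (∀ i', ‖wt i'‖ ≤ 1) →
        ∀ w : Fin nx → ℝ, ‖w‖ ≤ σw →
          ∃ wtt : Fin nx → ℝ, ‖wtt‖ ≤ 1 ∧
            (p.1 * A 0 + p.2 * B 0).mulVec x0 +
              (∑ i' : Fin t, (p.1 * A i'.succ + p.2 * B i'.succ).mulVec (wt i')) + w =
            (S 0).mulVec x0 + (∑ i' : Fin t, (S i'.succ).mulVec (wt i')) +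
              (Matrix.diagonal dt).mulVec wtt := by
  intro p hp wt hwt w hw
  -- F q s : the "error" matrix; V q : the lumped uncertainty vector
  set F : (Matrix (Fin nx) (Fin nx) ℝ × Matrix (Fin nx) (Fin nu) ℝ) → Fin (t+1) →
      Matrix (Fin nx) (Fin nx) ℝ :=
    fun q s => q.1 * A s + q.2 * B s - S s with hF
  set V : (Matrix (Fin nx) (Fin nx) ℝ × Matrix (Fin nx) (Fin nu) ℝ) → Fin nx → ℝ :=
    fun q => (F q 0).mulVec x0 + (∑ i' : Fin t, (F q i'.succ).mulVec (wt i')) + w with hV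
  set D : Set (Matrix (Fin nx) (Fin nx) ℝ × Matrix (Fin nx) (Fin nu) ℝ) :=
    {q | ∀ i, |V q i| ≤ dt i} with hD
  -- entrywise bound on mulVec from row ℓ1 norm
  have hrow : ∀ (Mm : Matrix (Fin nx) (Fin nx) ℝ) (v : Fin nx → ℝ) (i : Fin nx), ‖v‖ ≤ 1 →
      |(Mm.mulVec v) i| ≤ ∑ k, |Mm i k| := by
    intro Mm v i hv
    calc |(Mm.mulVec v) i| = |∑ k, Mm i k * v k| := rfl
      _ ≤ ∑ k, |Mm i k * v k| := Finset.abs_sum_le_sum_abs _ _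
      _ ≤ ∑ k, |Mm i k| * 1 := by
          refine Finset.sum_le_sum fun k _ => ?_
          rw [abs_mul]
          exact mul_le_mul_of_nonneg_left
            (le_trans (by rw [← Real.norm_eq_abs]; exact norm_le_pi_norm v k) hv) (abs_nonneg _)
      _ = ∑ k, |Mm i k| := by simp
  -- vertices belong to D
  have hvert : Set.range (fun j => (ΔA j, ΔB j)) ⊆ D := by
    rintro _ ⟨j, rfl⟩ i
    have hwi : |w i| ≤ σw := le_trans (by rw [← Real.norm_eq_abs]; exact norm_le_pi_norm w i) hw
    have h0 : V (ΔA j, ΔB j) i = ((F (ΔA j, ΔB j) 0).mulVec x0) i +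
        (∑ i' : Fin t, ((F (ΔA j, ΔB j) i'.succ).mulVec (wt i')) i) + w i := by
      simp [hV, Finset.sum_apply]
    rw [h0]
    calc |((F (ΔA j, ΔB j) 0).mulVec x0) i +
        (∑ i' : Fin t, ((F (ΔA j, ΔB j) i'.succ).mulVec (wt i')) i) + w i|
        ≤ |((F (ΔA j, ΔB j) 0).mulVec x0) i +
            (∑ i' : Fin t, ((F (ΔA j, ΔB j) i'.succ).mulVec (wt i')) i)| + |w i| := abs_add_le _ _
      _ ≤ |((F (ΔA j, ΔB j) 0).mulVec x0) i| +
            |∑ i' : Fin t, ((F (ΔA j, ΔB j) i'.succ).mulVec (wt i')) i| + |w i| := by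
          gcongr; exact abs_add_le _ _
      _ ≤ |((F (ΔA j, ΔB j) 0).mulVec x0) i| +
            (∑ i' : Fin t, ∑ k, |(F (ΔA j, ΔB j) i'.succ) i k|) + σw := by
          gcongr
          · calc |∑ i' : Fin t, ((F (ΔA j, ΔB j) i'.succ).mulVec (wt i')) i|
                ≤ ∑ i' : Fin t, |((F (ΔA j, ΔB j) i'.succ).mulVec (wt i')) i| :=
                  Finset.abs_sum_le_sum_abs _ _
              _ ≤ ∑ i' : Fin t, ∑ k, |(F (ΔA j, ΔB j) i'.succ) i k| :=
                  Finset.sum_le_sum fun i' _ => hrow _ _ i (hwt i')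
      _ ≤ dt i := hcon j i
  -- D is convex
  have hDconv : Convex ℝ D := by
    intro q hq r hr a b ha hb hab
    obtain rfl : b = 1 - a := by linarith
    intro i
    have key : ∀ s : Fin (t+1), F (a • q + (1 - a) • r) s = a • F q s + (1 - a) • F r s := by
      intro s
      have h1 : (a • q + (1 - a) • r).1 = a • q.1 + (1 - a) • r.1 := rfl
      have h2 : (a • q + (1 - a) • r).2 = a • q.2 + (1 - a) • r.2 := rfl
      simp only [hF, h1, h2, Matrix.add_mul, Matrix.smul_mul]
      module
    have hVc : V (a • q + (1 - a) • r) = a • V q + (1 - a) • V r := by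
      simp only [hV, key, Matrix.add_mulVec, Matrix.smul_mulVec,
        Finset.sum_add_distrib, ← Finset.smul_sum]
      module
    have hVi : V (a • q + (1 - a) • r) i = a * V q i + (1 - a) * V r i := by
      rw [hVc]; simp
    rw [hVi]
    calc |a * V q i + (1 - a) * V r i| ≤ |a * V q i| + |(1 - a) * V r i| := abs_add_le _ _
      _ = a * |V q i| + (1 - a) * |V r i| := by
          rw [abs_mul, abs_mul, abs_of_nonneg ha, abs_of_nonneg hb]
      _ ≤ a * dt i + (1 - a) * dt i := by gcongr; exacts [hq i, hr i]
      _ = dt i := by rw [← add_mul, hab, one_mul]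
  have hpD : p ∈ D := convexHull_min hvert hDconv hp
  refine ⟨fun i => V p i / dt i, ?_, ?_⟩
  · rw [pi_norm_le_iff_of_nonneg zero_le_one]
    intro i
    rw [Real.norm_eq_abs, abs_div, abs_of_pos (hdt i), div_le_one (hdt i)]
    exact hpD i
  · funext i
    have hdiag : ((Matrix.diagonal dt).mulVec fun i => V p i / dt i) i = V p i := by
      rw [Matrix.mulVec_diagonal]
      exact mul_div_cancel₀ _ (ne_of_gt (hdt i))
    simp only [Pi.add_apply, Finset.sum_apply, hdiag]
    have hVpi : V p i = ((F p 0).mulVec x0) i +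
        (∑ i' : Fin t, ((F p i'.succ).mulVec (wt i')) i) + w i := by
      simp [hV, Finset.sum_apply]
    rw [hVpi]
    simp only [hF, Matrix.sub_mulVec, Pi.sub_apply, Finset.sum_sub_distrib]
    ring
end

section
/- Let Φ̃_x ∈ ℝ^{(T+1)n_x × (T+1)n_x}, Φ̃_u ∈ ℝ^{(T+1)n_u × (T+1)n_x} be block-lower-triangular, let Σ ∈ ℝ^{(T+1)n_x × (T+1)n_x} be block-lower-triangular with Σ_{0,0} = I and Σ_{t+1,t+1} = diag(d_t), d_t ∈ ℝ^{n_x} with strictly positive entries for t = 0,…,T−1, let σ_w ≥ 0, and let V be a finite set of matrix pairs (Δ_{A,j},Δ_{B,j}). Suppose the over-approximation constraints hold: for every t = 0,…,T−1, every (Δ_{A,j},Δ_{B,j}) ∈ V, and every i ∈ {1,…,n_x}, |e_i^⊤(Δ_{A,j}(Φ̃_x)_{t,0} + Δ_{B,j}(Φ̃_u)_{t,0} − Σ_{t+1,0}) x_0| + Σ_{i'=1}^{t} ‖e_i^⊤(Δ_{A,j}(Φ̃_x)_{t,i'} + Δ_{B,j}(Φ̃_u)_{t,i'} − Σ_{t+1,i'})‖_1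 + σ_w ≤ (d_t)_i. Then for every (Δ_A,Δ_B) in the convex hull of V and every w_0,…,w_{T−1} ∈ ℝ^{n_x} with ‖w_t‖_∞ ≤ σ_w, there exist w̃_0,…,w̃_{T−1} ∈ ℝ^{n_x} with ‖w̃_t‖_∞ ≤ 1 such that, with w̃⃗ := (x_0, w̃_0,…,w̃_{T−1}) and w⃗ := (x_0, w_0,…,w_{T−1}), the equality Z [bold(Δ_A) bold(Δ_B)] [Φ̃_x; Φ̃_u] w̃⃗ + w⃗ = Σ w̃⃗ holds. -/
/-- The `(i,j)` block of a block-partitioned matrix. -/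
def blk {T p q : ℕ} (M : Matrix (Fin (T + 1) × Fin p) (Fin (T + 1) × Fin q) ℝ)
    (i j : Fin (T + 1)) : Matrix (Fin p) (Fin q) ℝ :=
  fun a b => M (i, a) (j, b)

/-- Stacked signal `(x₀, v₀, …, v_{T-1}) ∈ ℝ^{(T+1)n}`. -/
def stack {T n : ℕ} (x0 : Fin n → ℝ) (v : Fin T → Fin n → ℝ) :
    Fin (T + 1) × Fin n → ℝ :=
  fun q => Fin.cases (motive := fun _ => ℝ) (x0 q.2) (fun t => v t q.2) q.1

/-- Strong recursion helper. -/
def strongRecFn {α : Type*} [Inhabited α] (G : ℕ → (ℕ → α) → α) : ℕ → α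
  | t => G t (fun s => if _h : s < t then strongRecFn G s else default)
  termination_by t => t
  decreasing_by exact _h

lemma strongRecFn_eq {α : Type*} [Inhabited α] (G : ℕ → (ℕ → α) → α) (t : ℕ) :
    strongRecFn G t = G t (fun s => if _h : s < t then strongRecFn G s else default) := by
  rw [strongRecFn]

lemma mulVec_blk {T p q : ℕ} (Φ : Matrix (Fin (T+1) × Fin p) (Fin (T+1) × Fin q) ℝ)
    (v : Fin (T+1) × Fin q → ℝ) (r : Fin (T+1)) (i : Fin p) :
    Φ.mulVec v (r, i) = ∑ s : Fin (T+1), ((blk Φ r s).mulVec (fun k => v (s, k))) i := by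
  simp [Matrix.mulVec, dotProduct, blk, Fintype.sum_prod_type]

lemma blk_blkdiag_mul {T n p q : ℕ} (A : Matrix (Fin n) (Fin p) ℝ)
    (Φ : Matrix (Fin (T+1) × Fin p) (Fin (T+1) × Fin q) ℝ) (r s : Fin (T+1)) :
    blk (blkdiag T A * Φ) r s = A * blk Φ r s := by
  ext i k
  simp [blk, blkdiag, Matrix.mul_apply, Fintype.sum_prod_type, ite_mul]

lemma shiftZ_mulVec_zero {T n : ℕ} (u : Fin (T+1) × Fin n → ℝ) (i : Fin n) :
    (shiftZ T n).mulVec u (0, i) = 0 := by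
  apply Finset.sum_eq_zero
  rintro ⟨r', i'⟩ -
  have : ¬(((0 : Fin (T+1)) : ℕ) = (r' : ℕ) + 1 ∧ i = i') := by
    rintro ⟨h, -⟩; simp at h
  simp [shiftZ, this]

lemma shiftZ_mulVec_succ {T n : ℕ} (u : Fin (T+1) × Fin n → ℝ) (t : Fin T) (i : Fin n) :
    (shiftZ T n).mulVec u (t.succ, i) = u (t.castSucc, i) := by
  unfold Matrix.mulVec dotProduct
  rw [Finset.sum_eq_single (t.castSucc, i)]
  · simp [shiftZ]
  · rintro ⟨r', i'⟩ - hne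
    have : ¬((t.succ : ℕ) = (r' : ℕ) + 1 ∧ i = i') := by
      rintro ⟨h, rfl⟩
      apply hne
      have h' : (r' : ℕ) = (t.castSucc : ℕ) := by
        simp [Fin.val_succ, Fin.coe_castSucc] at h ⊢; omega
      simp [Prod.ext_iff, Fin.ext_iff, h']
    simp only [shiftZ, if_neg this, zero_mul]
  · simp

theorem stmt11 (T nx nu M : ℕ) (hT : 1 ≤ T) (hnx : 1 ≤ nx) (hnu : 1 ≤ nu) (hM : 1 ≤ M)
    (x0 : Fin nx → ℝ)
    (Φx : Matrix (Fin (T + 1) × Fin nx) (Fin (T + 1) × Fin nx) ℝ)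
    (Φu : Matrix (Fin (T + 1) × Fin nu) (Fin (T + 1) × Fin nx) ℝ)
    (Sig : Matrix (Fin (T + 1) × Fin nx) (Fin (T + 1) × Fin nx) ℝ)
    (hΦxLT : BlockLT Φx) (hΦuLT : BlockLT Φu) (hSigLT : BlockLT Sig)
    (d : Fin T → Fin nx → ℝ) (hd : ∀ t i, 0 < d t i)
    (hSig00 : blk Sig 0 0 = 1)
    (hSigdiag : ∀ t : Fin T, blk Sig t.succ t.succ = Matrix.diagonal (d t))
    (σw : ℝ) (hσw : 0 ≤ σw)
    (ΔA : Fin M → Matrix (Fin nx) (Fin nx) ℝ) (ΔB : Fin M → Matrix (Fin nx) (Fin nu) ℝ)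
    (hcon : ∀ (t : Fin T) (j : Fin M) (i : Fin nx),
      |((ΔA j * blk Φx t.castSucc 0 + ΔB j * blk Φu t.castSucc 0 -
          blk Sig t.succ 0).mulVec x0) i| +
        (∑ i' ∈ Finset.univ.filter (fun i' : Fin T => i' < t), ∑ k : Fin nx,
          |(ΔA j * blk Φx t.castSucc i'.succ + ΔB j * blk Φu t.castSucc i'.succ -
            blk Sig t.succ i'.succ) i k|) + σw ≤ d t i) :
    ∀ p ∈ convexHull ℝ (Set.range fun j => (ΔA j, ΔB j)),
      ∀ w : Fin T → Fin nx → ℝ, (∀ t, ‖w t‖ ≤ σw) →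
        ∃ wt : Fin T → Fin nx → ℝ, (∀ t, ‖wt t‖ ≤ 1) ∧
          (shiftZ T nx * Matrix.fromCols (blkdiag T p.1) (blkdiag T p.2) *
              Matrix.fromRows Φx Φu).mulVec (stack x0 wt) + stack x0 w =
            Sig.mulVec (stack x0 wt) := by
  intro p hp w hw
  -- extract convex weights
  rw [convexHull_range_eq_exists_affineCombination] at hp
  obtain ⟨sf, wgt, hw0, hw1, hps⟩ := hp
  rw [Finset.affineCombination_eq_linear_combination _ _ _ hw1] at hps
  set lam : Fin M → ℝ := fun j => if j ∈ sf then wgt j else 0 with hlamdef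
  have hlam0 : ∀ j, 0 ≤ lam j := by
    intro j; by_cases h : j ∈ sf <;> simp [hlamdef, h]
    exact hw0 j h
  have hext : ∀ {E : Type} [AddCommMonoid E] [Module ℝ E] (f : Fin M → E),
      (∑ j ∈ sf, wgt j • f j) = ∑ j, lam j • f j := by
    intro E _ _ f
    rw [eq_comm]
    calc ∑ j, lam j • f j = ∑ j, if j ∈ sf then wgt j • f j else 0 :=
          Finset.sum_congr rfl fun j _ => by by_cases h : j ∈ sf <;> simp [hlamdef, h]
      _ = ∑ j ∈ sf, wgt j • f j := by rw [Finset.sum_ite_mem, Finset.univ_inter]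
  have hlam1 : ∑ j, lam j = 1 := by
    have := hext (E := ℝ) (fun _ => 1)
    simpa [hw1] using this.symm
  have hA : p.1 = ∑ j, lam j • ΔA j := by
    rw [← hps, Prod.fst_sum]
    simp only [Prod.smul_fst]
    exact hext _
  have hB : p.2 = ∑ j, lam j • ΔB j := by
    rw [← hps, Prod.snd_sum]
    simp only [Prod.smul_snd]
    exact hext _
  -- block matrices
  set Mb : Fin T → Fin (T+1) → Matrix (Fin nx) (Fin nx) ℝ :=
    fun t s => p.1 * blk Φx t.castSucc s + p.2 * blk Φu t.castSucc s - blk Sig t.succ s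
    with hMbdef
  set MbJ : Fin M → Fin T → Fin (T+1) → Matrix (Fin nx) (Fin nx) ℝ :=
    fun j t s => ΔA j * blk Φx t.castSucc s + ΔB j * blk Φu t.castSucc s - blk Sig t.succ s
    with hMbJdef
  have hMb : ∀ t s, Mb t s = ∑ j, lam j • MbJ j t s := by
    intro t s
    have h1 : blk Sig t.succ s = ∑ j, lam j • blk Sig t.succ s := by
      rw [← Finset.sum_smul, hlam1, one_smul]
    rw [hMbdef]
    simp only []
    rw [hA, hB, Matrix.sum_mul, Matrix.sum_mul]
    nth_rewrite 1 [h1]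
    rw [← Finset.sum_add_distrib, ← Finset.sum_sub_distrib]
    refine Finset.sum_congr rfl fun j _ => ?_
    simp [hMbJdef, Matrix.smul_mul, smul_add, smul_sub]
  have hMbentry : ∀ t s i k, Mb t s i k = ∑ j, lam j * MbJ j t s i k := by
    intro t s i k
    rw [hMb]
    simp [Matrix.sum_apply]
  have hMbmv : ∀ (t : Fin T) (v : Fin nx → ℝ) (i : Fin nx),
      (Mb t 0).mulVec v i = ∑ j, lam j * (MbJ j t 0).mulVec v i := by
    intro t v i
    simp only [Matrix.mulVec, dotProduct]
    calc ∑ k, Mb t 0 i k * v k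
        = ∑ k, ∑ j, lam j * MbJ j t 0 i k * v k := by
          refine Finset.sum_congr rfl fun k _ => ?_
          rw [hMbentry, Finset.sum_mul]
      _ = ∑ j, ∑ k, lam j * MbJ j t 0 i k * v k := Finset.sum_comm
      _ = ∑ j, lam j * ∑ k, MbJ j t 0 i k * v k := by
          refine Finset.sum_congr rfl fun j _ => ?_
          rw [Finset.mul_sum]
          exact Finset.sum_congr rfl fun k _ => by ring
  -- overapproximation constraint for the convex combination p
  have hconp : ∀ (t : Fin T) (i : Fin nx),
      |(Mb t 0).mulVec x0 i| +
        (∑ i' ∈ Finset.univ.filter (fun i' : Fin T => i' < t), ∑ k : Fin nx,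
          |Mb t i'.succ i k|) + σw ≤ d t i := by
    intro t i
    have h1 : |(Mb t 0).mulVec x0 i| ≤ ∑ j, lam j * |(MbJ j t 0).mulVec x0 i| := by
      rw [hMbmv]
      refine (Finset.abs_sum_le_sum_abs _ _).trans_eq ?_
      exact Finset.sum_congr rfl fun j _ => by rw [abs_mul, abs_of_nonneg (hlam0 j)]
    have h2 : (∑ i' ∈ Finset.univ.filter (fun i' : Fin T => i' < t), ∑ k : Fin nx,
        |Mb t i'.succ i k|) ≤ ∑ j, lam j *
          (∑ i' ∈ Finset.univ.filter (fun i' : Fin T => i' < t), ∑ k : Fin nx,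
            |MbJ j t i'.succ i k|) := by
      calc (∑ i' ∈ Finset.univ.filter (fun i' : Fin T => i' < t), ∑ k : Fin nx,
            |Mb t i'.succ i k|)
          ≤ ∑ i' ∈ Finset.univ.filter (fun i' : Fin T => i' < t), ∑ k : Fin nx,
            ∑ j, lam j * |MbJ j t i'.succ i k| := by
            refine Finset.sum_le_sum fun i' _ => Finset.sum_le_sum fun k _ => ?_
            rw [hMbentry]
            refine (Finset.abs_sum_le_sum_abs _ _).trans_eq ?_
            exact Finset.sum_congr rfl fun j _ => by rw [abs_mul, abs_of_nonneg (hlam0 j)]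
        _ = ∑ j, lam j * (∑ i' ∈ Finset.univ.filter (fun i' : Fin T => i' < t),
            ∑ k : Fin nx, |MbJ j t i'.succ i k|) := by
            rw [show (∑ i' ∈ Finset.univ.filter (fun i' : Fin T => i' < t), ∑ k : Fin nx,
                  ∑ j, lam j * |MbJ j t i'.succ i k|)
                = ∑ i' ∈ Finset.univ.filter (fun i' : Fin T => i' < t), ∑ j,
                  ∑ k : Fin nx, lam j * |MbJ j t i'.succ i k| from
              Finset.sum_congr rfl fun i' _ => Finset.sum_comm, Finset.sum_comm]
            refine Finset.sum_congr rfl fun j _ => ?_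
            rw [Finset.mul_sum]
            exact Finset.sum_congr rfl fun i' _ => (Finset.mul_sum _ _ _).symm
    have h3 : σw = ∑ j, lam j * σw := by rw [← Finset.sum_mul, hlam1, one_mul]
    calc |(Mb t 0).mulVec x0 i| + (∑ i' ∈ Finset.univ.filter (fun i' : Fin T => i' < t),
          ∑ k : Fin nx, |Mb t i'.succ i k|) + σw
        ≤ (∑ j, lam j * |(MbJ j t 0).mulVec x0 i|) +
          (∑ j, lam j * (∑ i' ∈ Finset.univ.filter (fun i' : Fin T => i' < t),
            ∑ k : Fin nx, |MbJ j t i'.succ i k|)) + (∑ j, lam j * σw) := by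
          rw [← h3]; exact add_le_add (add_le_add h1 h2) le_rfl
      _ = ∑ j, lam j * (|(MbJ j t 0).mulVec x0 i| +
          (∑ i' ∈ Finset.univ.filter (fun i' : Fin T => i' < t),
            ∑ k : Fin nx, |MbJ j t i'.succ i k|) + σw) := by
          rw [← Finset.sum_add_distrib, ← Finset.sum_add_distrib]
          exact Finset.sum_congr rfl fun j _ => by ring
      _ ≤ ∑ j, lam j * d t i := by
          refine Finset.sum_le_sum fun j _ => mul_le_mul_of_nonneg_left ?_ (hlam0 j)
          have := hcon t j i
          simpa [hMbJdef] using this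
      _ = d t i := by rw [← Finset.sum_mul, hlam1, one_mul]
  -- recursive construction of wt
  set G : ℕ → (ℕ → (Fin nx → ℝ)) → (Fin nx → ℝ) := fun n prev i =>
    if hn : n < T then
      (d ⟨n, hn⟩ i)⁻¹ * ((Mb ⟨n, hn⟩ 0).mulVec x0 i +
        (∑ i' ∈ Finset.univ.filter (fun i' : Fin T => i' < ⟨n, hn⟩),
          (Mb ⟨n, hn⟩ i'.succ).mulVec (prev i') i) + w ⟨n, hn⟩ i)
    else 0 with hGdef
  set wt : Fin T → Fin nx → ℝ := fun t => strongRecFn G t with hwtdef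
  have hrec : ∀ (t : Fin T) (i : Fin nx),
      d t i * wt t i = (Mb t 0).mulVec x0 i +
        (∑ i' ∈ Finset.univ.filter (fun i' : Fin T => i' < t),
          (Mb t i'.succ).mulVec (wt i') i) + w t i := by
    intro t i
    have h1 : wt t i = (d t i)⁻¹ * ((Mb t 0).mulVec x0 i +
        (∑ i' ∈ Finset.univ.filter (fun i' : Fin T => i' < t),
          (Mb t i'.succ).mulVec (wt i') i) + w t i) := by
      rw [hwtdef]
      simp only []
      rw [strongRecFn_eq]
      rw [hGdef]
      simp only [dif_pos t.isLt, Fin.eta]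
      congr 1
      congr 1
      congr 1
      refine Finset.sum_congr rfl fun i' hi' => ?_
      have hlt : (i' : ℕ) < (t : ℕ) := by
        simp only [Finset.mem_filter] at hi'; exact hi'.2
      rw [dif_pos hlt]
    rw [h1, ← mul_assoc, mul_inv_cancel₀ (hd t i).ne', one_mul]
  -- norm bound
  have hbnd : ∀ (n : ℕ) (hn : n < T) (i : Fin nx), |wt ⟨n, hn⟩ i| ≤ 1 := by
    intro n
    induction n using Nat.strong_induction_on with
    | _ n ih =>
      intro hn i
      set t : Fin T := ⟨n, hn⟩ with htdef
      have key := hrec t i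
      have hb1 : |(∑ i' ∈ Finset.univ.filter (fun i' : Fin T => i' < t),
          (Mb t i'.succ).mulVec (wt i') i)| ≤
          ∑ i' ∈ Finset.univ.filter (fun i' : Fin T => i' < t), ∑ k : Fin nx,
            |Mb t i'.succ i k| := by
        refine (Finset.abs_sum_le_sum_abs _ _).trans (Finset.sum_le_sum fun i' hi' => ?_)
        have hlt : (i' : ℕ) < n := by
          simp only [Finset.mem_filter] at hi'; exact hi'.2
        have hwt1 : ∀ k, |wt i' k| ≤ 1 := by
          intro k
          have := ih i' hlt i'.isLt k
          simpa [Fin.eta] using this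
        calc |(Mb t i'.succ).mulVec (wt i') i|
            = |∑ k : Fin nx, Mb t i'.succ i k * wt i' k| := rfl
          _ ≤ ∑ k : Fin nx, |Mb t i'.succ i k * wt i' k| :=
              Finset.abs_sum_le_sum_abs _ _
          _ ≤ ∑ k : Fin nx, |Mb t i'.succ i k| := by
              refine Finset.sum_le_sum fun k _ => ?_
              rw [abs_mul]
              exact mul_le_of_le_one_right (abs_nonneg _) (hwt1 k)
      have hb2 : |w t i| ≤ σw := by
        have h := hw t
        have := norm_le_pi_norm (w t) i
        rw [Real.norm_eq_abs] at this
        linarith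
      have hdw : d t i * |wt t i| ≤ d t i := by
        calc d t i * |wt t i| = |d t i * wt t i| := by
              rw [abs_mul, abs_of_pos (hd t i)]
          _ ≤ |(Mb t 0).mulVec x0 i| +
              |(∑ i' ∈ Finset.univ.filter (fun i' : Fin T => i' < t),
                (Mb t i'.succ).mulVec (wt i') i)| + |w t i| := by
              rw [key]; exact (abs_add_le _ _).trans (add_le_add (abs_add_le _ _) le_rfl)
          _ ≤ |(Mb t 0).mulVec x0 i| +
              (∑ i' ∈ Finset.univ.filter (fun i' : Fin T => i' < t), ∑ k : Fin nx,
                |Mb t i'.succ i k|) + σw := by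
              exact add_le_add (add_le_add le_rfl hb1) hb2
          _ ≤ d t i := hconp t i
      nlinarith [hd t i, abs_nonneg (wt t i)]
  refine ⟨wt, fun t => ?_, ?_⟩
  · rw [pi_norm_le_iff_of_nonneg zero_le_one]
    intro i
    rw [Real.norm_eq_abs]
    have := hbnd t.1 t.isLt i
    simpa [Fin.eta] using this
  · -- the closed-loop equation
    funext q
    obtain ⟨r, i⟩ := q
    rw [Matrix.mul_assoc, Matrix.fromCols_mul_fromRows, ← Matrix.mulVec_mulVec]
    simp only [Pi.add_apply]
    have hstack0 : (fun k => stack x0 wt ((0 : Fin (T+1)), k)) = x0 := by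
      funext k; simp [stack]
    have hstacks : ∀ (t' : Fin T), (fun k => stack x0 wt (t'.succ, k)) = wt t' := by
      intro t'; funext k; simp [stack]
    induction r using Fin.cases with
    | zero =>
      rw [shiftZ_mulVec_zero, zero_add, mulVec_blk]
      rw [Fin.sum_univ_succ]
      have hz : ∀ t' : Fin T,
          ((blk Sig 0 t'.succ).mulVec (fun k => stack x0 wt (t'.succ, k))) i = 0 := by
        intro t'
        have : blk Sig 0 t'.succ = 0 := by
          funext a b; exact hSigLT 0 t'.succ (Fin.succ_pos _) a b
        rw [this, Matrix.zero_mulVec]; rfl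
      rw [Finset.sum_eq_zero fun t' _ => hz t', add_zero, hSig00, hstack0,
        Matrix.one_mulVec]
      simp [stack]
    | succ t =>
      rw [shiftZ_mulVec_succ, mulVec_blk, mulVec_blk]
      have hblkadd : ∀ s : Fin (T+1),
          blk (blkdiag T p.1 * Φx + blkdiag T p.2 * Φu) t.castSucc s =
            Mb t s + blk Sig t.succ s := by
        intro s
        have : blk (blkdiag T p.1 * Φx + blkdiag T p.2 * Φu) t.castSucc s =
            blk (blkdiag T p.1 * Φx) t.castSucc s + blk (blkdiag T p.2 * Φu) t.castSucc s := rfl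
        rw [this, blk_blkdiag_mul, blk_blkdiag_mul, hMbdef]
        simp only []
        abel
      have hzero : ∀ i' : Fin T, t < i' → Mb t i'.succ = 0 := by
        intro i' hti'
        have h1 : blk Φx t.castSucc i'.succ = 0 := by
          funext a b
          exact hΦxLT t.castSucc i'.succ (Fin.castSucc_lt_succ_iff.mpr hti'.le) a b
        have h2 : blk Φu t.castSucc i'.succ = 0 := by
          funext a b
          exact hΦuLT t.castSucc i'.succ (Fin.castSucc_lt_succ_iff.mpr hti'.le) a b
        have h3 : blk Sig t.succ i'.succ = 0 := by
          funext a b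
          exact hSigLT t.succ i'.succ (Fin.succ_lt_succ_iff.mpr hti') a b
        rw [hMbdef]
        simp only []
        rw [h1, h2, h3]
        simp
      have hdiagterm : Mb t t.succ = -(Matrix.diagonal (d t)) := by
        have h1 : blk Φx t.castSucc t.succ = 0 := by
          funext a b
          exact hΦxLT t.castSucc t.succ (Fin.castSucc_lt_succ_iff.mpr le_rfl) a b
        have h2 : blk Φu t.castSucc t.succ = 0 := by
          funext a b
          exact hΦuLT t.castSucc t.succ (Fin.castSucc_lt_succ_iff.mpr le_rfl) a b
        rw [hMbdef]
        simp only []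
        rw [h1, h2, hSigdiag t]
        simp
      have key : ∑ s : Fin (T+1), ((Mb t s).mulVec (fun k => stack x0 wt (s, k))) i
          = - w t i := by
        rw [Fin.sum_univ_succ]
        have hsplit := Finset.sum_filter_add_sum_filter_not Finset.univ
          (fun i' : Fin T => i' < t)
          (fun i' : Fin T => ((Mb t i'.succ).mulVec (fun k => stack x0 wt (i'.succ, k))) i)
        rw [← hsplit]
        have hrest : ∑ i' ∈ Finset.univ.filter (fun i' : Fin T => ¬ i' < t),
            ((Mb t i'.succ).mulVec (fun k => stack x0 wt (i'.succ, k))) i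
            = -(d t i * wt t i) := by
          rw [Finset.sum_eq_single_of_mem t (by simp)]
          · rw [hdiagterm, hstacks, Matrix.neg_mulVec]
            simp [Matrix.mulVec_diagonal]
          · intro i' hi' hne
            have hti' : t < i' := by
              simp only [Finset.mem_filter, not_lt] at hi'
              exact lt_of_le_of_ne hi'.2 (Ne.symm hne)
            rw [hzero i' hti', Matrix.zero_mulVec]
            rfl
        rw [hrest, hstack0]
        have hsum1 : ∑ i' ∈ Finset.univ.filter (fun i' : Fin T => i' < t),
            ((Mb t i'.succ).mulVec (fun k => stack x0 wt (i'.succ, k))) i =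
            ∑ i' ∈ Finset.univ.filter (fun i' : Fin T => i' < t),
              ((Mb t i'.succ).mulVec (wt i')) i := by
          exact Finset.sum_congr rfl fun i' _ => by rw [hstacks]
        rw [hsum1]
        have := hrec t i
        linarith
      calc (∑ s : Fin (T+1), ((blk (blkdiag T p.1 * Φx + blkdiag T p.2 * Φu)
              t.castSucc s).mulVec (fun k => stack x0 wt (s, k))) i) + stack x0 w (t.succ, i)
          = (∑ s : Fin (T+1), (((Mb t s).mulVec (fun k => stack x0 wt (s, k))) i +
              ((blk Sig t.succ s).mulVec (fun k => stack x0 wt (s, k))) i)) + w t i := by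
            congr 1
            refine Finset.sum_congr rfl fun s _ => ?_
            rw [hblkadd, Matrix.add_mulVec]
            rfl
        _ = (∑ s : Fin (T+1), ((Mb t s).mulVec (fun k => stack x0 wt (s, k))) i) +
            (∑ s : Fin (T+1), ((blk Sig t.succ s).mulVec (fun k => stack x0 wt (s, k))) i)
            + w t i := by rw [Finset.sum_add_distrib]
        _ = ∑ s : Fin (T+1), ((blk Sig t.succ s).mulVec (fun k => stack x0 wt (s, k))) i := by
            rw [key]; ring
end

section
/- Let Σ ∈ ℝ^{(T+1)n_x × (T+1)n_x} be an invertible block-lower-triangular matrix whose diagonal blocks are invertible, and let Φ̃_x ∈ ℝ^{(T+1)n_x × (T+1)n_x}, Φ̃_u ∈ ℝ^{(T+1)n_u × (T+1)n_x} be block-lower-triangular satisfying (I − Z bold(Â)) Φ̃_x − Z bold(B̂) Φ̃_u = Σ. Then every diagonal block of Φ̃_x equals the corresponding diagonal block of Σ, Φ̃_x is invertible, K := Φ̃_u Φ̃_x^{-1} is block-lower-triangular, and for every w̃ ∈ ℝ^{(T+1)n_x}, the unique pair (x, u) satisfying x = Z bold(Â) x + Z bold(B̂) u + Σ w̃ together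 with u = K x is given by x = Φ̃_x w̃ and u = Φ̃_u w̃. -/
lemma blockLT_mul {T p q r : ℕ} {M : Matrix (Fin (T+1) × Fin p) (Fin (T+1) × Fin q) ℝ}
    {N : Matrix (Fin (T+1) × Fin q) (Fin (T+1) × Fin r) ℝ}
    (hM : BlockLT M) (hN : BlockLT N) : BlockLT (M * N) := by
  intro i j hij a b
  rw [Matrix.mul_apply]
  apply Finset.sum_eq_zero
  rintro ⟨k, c⟩ -
  rcases lt_or_ge i k with h | h
  · rw [hM i k h a c, zero_mul]
  · rw [hN k j (lt_of_le_of_lt h hij) c b, mul_zero]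

lemma blockLT_blkdiag {T p q : ℕ} (M : Matrix (Fin p) (Fin q) ℝ) :
    BlockLT (blkdiag T M) := by
  intro i j hij a b
  simp [blkdiag, ne_of_lt hij]

lemma shiftZ_mul_le {T p q : ℕ} {N : Matrix (Fin (T+1) × Fin p) (Fin (T+1) × Fin q) ℝ}
    (hN : BlockLT N) {i j : Fin (T+1)} (hij : i ≤ j) (a : Fin p) (b : Fin q) :
    (shiftZ T p * N) (i, a) (j, b) = 0 := by
  rw [Matrix.mul_apply]
  apply Finset.sum_eq_zero
  rintro ⟨k, c⟩ -
  by_cases h : (i : ℕ) = (k : ℕ) + 1 ∧ a = c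
  · have hk : k < j := by
      have h1 : (k : ℕ) < (j : ℕ) := by
        have := Fin.le_def.mp hij; omega
      exact Fin.lt_def.mpr h1
    rw [hN k j hk c b, mul_zero]
  · simp only [shiftZ, if_neg h, zero_mul]

theorem stmt15 (T nx nu : ℕ) (hT : 1 ≤ T) (hnx : 1 ≤ nx) (hnu : 1 ≤ nu)
    (Ahat : Matrix (Fin nx) (Fin nx) ℝ) (Bhat : Matrix (Fin nx) (Fin nu) ℝ)
    (Sig : Matrix (Fin (T + 1) × Fin nx) (Fin (T + 1) × Fin nx) ℝ)
    (hSigLT : BlockLT Sig) (hSigUnit : IsUnit Sig)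
    (hSigDiagUnit : ∀ t : Fin (T + 1), IsUnit (blk Sig t t))
    (Φx : Matrix (Fin (T + 1) × Fin nx) (Fin (T + 1) × Fin nx) ℝ)
    (Φu : Matrix (Fin (T + 1) × Fin nu) (Fin (T + 1) × Fin nx) ℝ)
    (hΦxLT : BlockLT Φx) (hΦuLT : BlockLT Φu)
    (haff : (1 - shiftZ T nx * blkdiag T Ahat) * Φx - shiftZ T nx * blkdiag T Bhat * Φu = Sig)
    (K : Matrix (Fin (T + 1) × Fin nu) (Fin (T + 1) × Fin nx) ℝ)
    (hK : K = Φu * Φx⁻¹) :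
    (∀ t : Fin (T + 1), blk Φx t t = blk Sig t t) ∧
    IsUnit Φx ∧
    BlockLT K ∧
    ∀ wt : Fin (T + 1) × Fin nx → ℝ,
      ∀ (x : Fin (T + 1) × Fin nx → ℝ) (u : Fin (T + 1) × Fin nu → ℝ),
        (x = (shiftZ T nx * blkdiag T Ahat).mulVec x +
            (shiftZ T nx * blkdiag T Bhat).mulVec u + Sig.mulVec wt ∧
          u = K.mulVec x) ↔
        (x = Φx.mulVec wt ∧ u = Φu.mulVec wt) := by
  set S : Matrix (Fin (T + 1) × Fin nx) (Fin (T + 1) × Fin nx) ℝ :=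
    shiftZ T nx * blkdiag T Ahat with hSdef
  set Bm : Matrix (Fin (T + 1) × Fin nx) (Fin (T + 1) × Fin nu) ℝ :=
    shiftZ T nx * blkdiag T Bhat with hBdef
  have haff' : Φx - shiftZ T nx * (blkdiag T Ahat * Φx)
      - shiftZ T nx * (blkdiag T Bhat * Φu) = Sig := by
    rw [← haff, hSdef, hBdef]
    simp only [Matrix.sub_mul, Matrix.one_mul, Matrix.mul_assoc]
  have hbAx : BlockLT (blkdiag T Ahat * Φx) := blockLT_mul (blockLT_blkdiag _) hΦxLT
  have hbBu : BlockLT (blkdiag T Bhat * Φu) := blockLT_mul (blockLT_blkdiag _) hΦuLT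
  -- diagonal blocks
  have hdiag : ∀ t : Fin (T + 1), blk Φx t t = blk Sig t t := by
    intro t
    funext a b
    have h : (Φx - shiftZ T nx * (blkdiag T Ahat * Φx)
        - shiftZ T nx * (blkdiag T Bhat * Φu)) (t, a) (t, b) = Sig (t, a) (t, b) := by
      rw [haff']
    rw [Matrix.sub_apply, Matrix.sub_apply, shiftZ_mul_le hbAx le_rfl,
      shiftZ_mul_le hbBu le_rfl, sub_zero, sub_zero] at h
    exact h
  -- block triangular structure
  have hb : Matrix.BlockTriangular Φx (fun p => OrderDual.toDual p.1) := by
    intro p q h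
    exact hΦxLT p.1 q.1 h p.2 q.2
  have hsq : ∀ t : Fin (T + 1),
      (Φx.toSquareBlock (fun p => OrderDual.toDual p.1) (OrderDual.toDual t)).det
        = (blk Φx t t).det := by
    intro t
    let e : {p : Fin (T + 1) × Fin nx // OrderDual.toDual p.1 = OrderDual.toDual t}
        ≃ Fin nx :=
      { toFun := fun p => p.1.2
        invFun := fun a => ⟨(t, a), rfl⟩
        left_inv := by
          rintro ⟨⟨i, a⟩, hi⟩
          have : i = t := OrderDual.toDual_inj.mp hi
          subst this; rfl
        right_inv := fun a => rfl }
    have heq : Φx.toSquareBlock (fun p => OrderDual.toDual p.1) (OrderDual.toDual t)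
        = (blk Φx t t).submatrix e e := by
      funext i j
      obtain ⟨⟨i1, a⟩, hi⟩ := i
      obtain ⟨⟨j1, b⟩, hj⟩ := j
      have hi' : i1 = t := OrderDual.toDual_inj.mp hi
      have hj' : j1 = t := OrderDual.toDual_inj.mp hj
      subst hi'; subst hj'
      rfl
    rw [heq, Matrix.det_submatrix_equiv_self]
  have hdet : IsUnit Φx.det := by
    rw [hb.det_fintype]
    rw [isUnit_iff_ne_zero, Finset.prod_ne_zero_iff]
    intro k _
    rw [show k = OrderDual.toDual (OrderDual.ofDual k) from rfl, hsq, hdiag]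
    exact ((Matrix.isUnit_iff_isUnit_det _).mp
      (hSigDiagUnit (OrderDual.ofDual k))).ne_zero
  have hΦxUnit : IsUnit Φx := (Matrix.isUnit_iff_isUnit_det _).mpr hdet
  haveI : Invertible Φx := Φx.invertibleOfIsUnitDet hdet
  have hinvBT : Matrix.BlockTriangular Φx⁻¹ (fun p => OrderDual.toDual p.1) :=
    Matrix.blockTriangular_inv_of_blockTriangular hb
  have hinvLT : BlockLT Φx⁻¹ := by
    intro i j hij a b
    exact hinvBT (show (fun p : Fin (T+1) × Fin nx => OrderDual.toDual p.1) (j, b)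
      < (fun p : Fin (T+1) × Fin nx => OrderDual.toDual p.1) (i, a) from hij)
  have hKLT : BlockLT K := hK ▸ blockLT_mul hΦuLT hinvLT
  have hinv1 : Φx⁻¹ * Φx = 1 := Matrix.nonsing_inv_mul _ hdet
  have hinv2 : Φx * Φx⁻¹ = 1 := Matrix.mul_nonsing_inv _ hdet
  have hKΦx : K * Φx = Φu := by rw [hK, Matrix.mul_assoc, hinv1, Matrix.mul_one]
  have hSigDet : IsUnit Sig.det := (Matrix.isUnit_iff_isUnit_det _).mp hSigUnit
  have hsum : S * Φx + Bm * Φu + Sig = Φx := by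
    rw [← haff]; noncomm_ring
  refine ⟨hdiag, hΦxUnit, hKLT, ?_⟩
  intro wt x u
  constructor
  · rintro ⟨hx, hu⟩
    have hM : (1 - S - Bm * K) * Φx = Sig := by
      have h1 : (1 - S - Bm * K) * Φx = Φx - S * Φx - Bm * (K * Φx) := by
        simp only [Matrix.sub_mul, Matrix.one_mul, Matrix.mul_assoc]
      rw [h1, hKΦx, ← haff, Matrix.sub_mul, Matrix.one_mul]
    have hMe : 1 - S - Bm * K = Sig * Φx⁻¹ := by
      rw [← hM, Matrix.mul_assoc (1 - S - Bm * K) Φx Φx⁻¹, hinv2, Matrix.mul_one]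
    have h1 : (1 - S - Bm * K).mulVec x = Sig.mulVec wt := by
      rw [Matrix.sub_mulVec, Matrix.sub_mulVec, Matrix.one_mulVec,
        ← Matrix.mulVec_mulVec x Bm K, ← hu]
      nth_rewrite 1 [hx]
      abel
    rw [hMe] at h1
    have h2 : Φx⁻¹.mulVec x = wt := by
      have h3 := congrArg (Sig⁻¹.mulVec) h1
      rw [Matrix.mulVec_mulVec, Matrix.mulVec_mulVec, ← Matrix.mul_assoc,
        Matrix.nonsing_inv_mul _ hSigDet, Matrix.one_mul, Matrix.one_mulVec] at h3
      exact h3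
    have hxw : x = Φx.mulVec wt := by
      rw [← h2, Matrix.mulVec_mulVec, hinv2, Matrix.one_mulVec]
    refine ⟨hxw, ?_⟩
    rw [hu, hxw, Matrix.mulVec_mulVec, hKΦx]
  · rintro ⟨hx, hu⟩
    have hu' : u = K.mulVec x := by
      rw [hu, hx, Matrix.mulVec_mulVec, hKΦx]
    refine ⟨?_, hu'⟩
    rw [hx, hu, Matrix.mulVec_mulVec, Matrix.mulVec_mulVec,
      ← Matrix.add_mulVec, ← Matrix.add_mulVec, hsum]
end
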